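/- Let $P$ and $Q$ be probability distributions on a finite set $\mathcal{Y}$ such that $P(y) \le e^\epsilon Q(y)$ and $Q(y) \le e^\epsilon P(y)$ for all $y$ (i.e., they arise from an $\epsilon$-DP mechanism on adjacent inputs). Then the KL divergence satisfies $D_{KL}(P \| Q) \le \epsilon (e^\epsilon - 1)$. -/
import Mathlib


/-- If `P` and `Q` are distributions on a finite set with two-sided pointwise
ratio bounds `e^ε` (as arising from an `ε`-DP mechanism on adjacent inputs),
then `D_KL(P‖Q) ≤ ε(e^ε - 1)`. -/
theorem dp_kl_divergence_bound {Y : Type*} [Fintype Y]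
    (P Q : Y → ℝ) (ε : ℝ)
    (hPnonneg : ∀ y, 0 ≤ P y) (hQnonneg : ∀ y, 0 ≤ Q y)
    (hPsum : ∑ y : Y, P y = 1) (hQsum : ∑ y : Y, Q y = 1)
    (hPQ : ∀ y, P y ≤ Real.exp ε * Q y)
    (hQP : ∀ y, Q y ≤ Real.exp ε * P y) :
    ∑ y : Y, P y * Real.log (P y / Q y) ≤ ε * (Real.exp ε - 1) := by
  have hε : 0 ≤ ε := by
    by_contra h
    push_neg at h
    have he : Real.exp ε < 1 := Real.exp_lt_one_iff.mpr h
    have hP0 : ∀ y, P y ≤ 0 := by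
      intro y
      nlinarith [hPQ y, hQP y, hPnonneg y, hQnonneg y, Real.exp_pos ε]
    have : (∑ y : Y, P y) ≤ 0 := Finset.sum_nonpos fun y _ => hP0 y
    linarith [hPsum ▸ this]
  have hE : (1:ℝ) ≤ Real.exp ε := Real.one_le_exp hε
  have key : ∀ y, P y * Real.log (P y / Q y) ≤
      ε * (Real.exp ε - 1) * Q y + (P y - Q y) := by
    intro y
    rcases eq_or_lt_of_le (hQnonneg y) with hQ0 | hQpos
    · have hP0 : P y = 0 := le_antisymm (by simpa [← hQ0] using hPQ y) (hPnonneg y)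
      simp [hP0, ← hQ0]
    · have hPpos : 0 < P y := by nlinarith [hQP y, Real.exp_pos ε]
      have hdiv : 0 < P y / Q y := div_pos hPpos hQpos
      have hub : Real.log (P y / Q y) ≤ ε := by
        rw [Real.log_le_iff_le_exp hdiv]
        exact (div_le_iff₀ hQpos).mpr (by linarith [hPQ y])
      have hlb : -ε ≤ Real.log (P y / Q y) := by
        have : Real.log (Q y / P y) ≤ ε := by
          rw [Real.log_le_iff_le_exp (div_pos hQpos hPpos)]
          exact (div_le_iff₀ hPpos).mpr (by linarith [hQP y])
        have hinv : Real.log (Q y / P y) = - Real.log (P y / Q y) := by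
          rw [← Real.log_inv, inv_div]
        linarith [hinv ▸ this]
      have hql : Q y * Real.log (P y / Q y) ≤ P y - Q y := by
        have h1 : Real.log (P y / Q y) ≤ P y / Q y - 1 :=
          Real.log_le_sub_one_of_pos hdiv
        have h2 : Q y * (P y / Q y - 1) = P y - Q y := by
          field_simp
        nlinarith
      set L := Real.log (P y / Q y) with hL
      have hPQ' := hPQ y
      have hQP' := hQP y
      rcases le_total (Q y) (P y) with hc | hc
      · have hLnn : 0 ≤ L := Real.log_nonneg ((one_le_div hQpos).mpr hc)
        nlinarith [mul_nonneg (sub_nonneg.mpr hc) (sub_nonneg.mpr hub),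
          mul_nonneg hε (sub_nonneg.mpr (show P y - Q y ≤ (Real.exp ε - 1) * Q y by linarith))]
      · have hLnp : L ≤ 0 := by
          have : P y / Q y ≤ 1 := (div_le_one hQpos).mpr hc
          exact Real.log_nonpos (le_of_lt hdiv) this
        nlinarith [mul_nonneg (sub_nonneg.mpr hc) (by linarith : 0 ≤ ε + L),
          mul_nonneg hε (sub_nonneg.mpr (show Q y - P y ≤ (Real.exp ε - 1) * Q y by nlinarith))]
  calc ∑ y : Y, P y * Real.log (P y / Q y)
      ≤ ∑ y : Y, (ε * (Real.exp ε - 1) * Q y + (P y - Q y)) :=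
        Finset.sum_le_sum fun y _ => key y
    _ = ε * (Real.exp ε - 1) := by
        rw [Finset.sum_add_distrib, Finset.sum_sub_distrib, ← Finset.mul_sum,
          hPsum, hQsum]
        ring
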